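/- arXiv:1603.08576 — 2 statements merged into one kernel-verified Lean document; each statement's English description precedes it below -/
import Mathlib

section
/- Let (R,m,k) be a commutative Noetherian local ring of depth at most 1 and M a finitely generated reflexive R-module. Then M is balanced if and only if M has a nonzero free R-module direct summand. -/
/-! If no functional `M → R` is onto, every value `f x` lies in `m`. A balanced module is
faithful, and reflexivity turns `s * f x = 0` for all `f, x` into `s • M = 0`; so `m` has no
nonzero annihilator in `R` and there is an `R`-regular `t ∈ m`. If `t` is `M`-regular and
`s M ⊆ t M`, then `s / t` is a central endomorphism of `M`, hence a scalar, so `t ∣ s`;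
reflexivity again gives `s M ⊆ t M` as soon as `m s ⊆ t R`, so `m` has no nonzero annihilator
in `R / tR` either, and there is an `R / tR`-regular `t' ∈ m`. By Rees' theorem
`Ext^i(k, R) = 0` for `i < 2`, contradicting depth at most one. Conversely, a free summand `R`
pins every central endomorphism down to its value on the generator. -/

open CategoryTheory

universe u v

/-- `M` is balanced if the natural map `R → Z(End_R M)`, sending `r` to multiplication by
`r`, is an isomorphism onto the center of `End_R M`. -/
def IsBalanced (R : Type u) (M : Type v) [CommRing R] [AddCommGroup M] [Module R M] : Prop :=
  Function.Bijective fun r : R =>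
    (⟨algebraMap R (Module.End R M) r, Subalgebra.algebraMap_mem _ r⟩ :
      Subalgebra.center R (Module.End R M))

/-- Depth at most one: `Hom_R(k,R) ≠ 0` or `Ext¹_R(k,R) ≠ 0`, where `k` is the residue
field of the local ring `R`. -/
def DepthLEOne (R : Type u) [CommRing R] [IsLocalRing R] : Prop :=
  Nontrivial (IsLocalRing.ResidueField R →ₗ[R] R) ∨
  Nontrivial (((Ext R (ModuleCat.{u} R) 1).obj
    (Opposite.op (ModuleCat.of R (IsLocalRing.ResidueField R)))).obj (ModuleCat.of R R))

section RegularElement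

variable {R N P : Type*} [CommRing R] [AddCommGroup N] [Module R N] [AddCommGroup P]
  [Module R P]

lemma LinearMap.exists_eq_smul_of_forall_exists_smul_eq {t : R} (ht : IsSMulRegular P t)
    (φ : N →ₗ[R] P) (h : ∀ n, ∃ p, t • p = φ n) : ∃ g : N →ₗ[R] P, φ = t • g := by
  let e := LinearEquiv.ofInjective (LinearMap.lsmul R P t) ht
  refine ⟨e.symm.toLinearMap ∘ₗ φ.codRestrict _ h, LinearMap.ext fun n => ?_⟩
  exact congrArg Subtype.val (e.apply_symm_apply ⟨φ n, h n⟩).symm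

lemma QuotSMulTop.mk_eq_zero_iff {t s : R} :
    (Submodule.Quotient.mk s : QuotSMulTop t R) = 0 ↔ t ∣ s := by
  rw [Submodule.Quotient.mk_eq_zero, Submodule.mem_smul_pointwise_iff_exists]
  simp [dvd_def, eq_comm]

end RegularElement

section Reflexive

open Module

variable (R : Type*) {M : Type*} [CommRing R] [AddCommGroup M] [Module R M] [IsReflexive R M]

lemma Module.IsReflexive.eq_zero_of_forall_dual_eq_zero {x : M} (h : ∀ f : Dual R M, f x = 0) :
    x = 0 :=
  (bijective_dual_eval R M).injective (by ext f; simpa using h f)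

variable {R}

lemma Module.IsReflexive.exists_smul_eq_smul {t s : R} (ht : IsSMulRegular R t)
    (h : ∀ (f : Dual R M) (x : M), t ∣ s * f x) (x : M) : ∃ y : M, t • y = s • x := by
  obtain ⟨g, hg⟩ := (s • Dual.eval R M x).exists_eq_smul_of_forall_exists_smul_eq ht
    fun f => (h f x).imp fun _ hc => hc.symm
  obtain ⟨y, rfl⟩ := (bijective_dual_eval R M).surjective g
  refine ⟨y, sub_eq_zero.mp (IsReflexive.eq_zero_of_forall_dual_eq_zero R fun f => ?_)⟩
  have hf := congr($hg f)
  simp only [LinearMap.smul_apply, Dual.eval_apply, smul_eq_mul] at hf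
  simp [hf]

end Reflexive

section Balanced

variable {R M N : Type*} [CommRing R] [AddCommGroup M] [Module R M] [AddCommGroup N] [Module R N]

lemma IsBalanced.faithfulSMul (hM : IsBalanced R M) : FaithfulSMul R M :=
  ⟨fun h => hM.1 (Subtype.ext (LinearMap.ext h))⟩

lemma IsBalanced.dvd_of_forall_exists_smul_eq (hM : IsBalanced R M) {t s : R}
    (ht : IsSMulRegular M t) (h : ∀ x : M, ∃ y, t • y = s • x) : t ∣ s := by
  obtain ⟨Φ, hΦ⟩ :=
    (s • LinearMap.id : Module.End R M).exists_eq_smul_of_forall_exists_smul_eq ht h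
  have hΦx (x : M) : s • x = t • Φ x := by simpa using congr($hΦ x)
  have hcenter : Φ ∈ Subalgebra.center R (Module.End R M) :=
    Subalgebra.mem_center_iff.mpr fun ψ => LinearMap.ext fun x => ht <| by
      simp only [Module.End.mul_apply]
      rw [← map_smul, ← hΦx, ← hΦx, map_smul]
  obtain ⟨r, hr⟩ := hM.2 ⟨Φ, hcenter⟩
  refine ⟨r, (hM.faithfulSMul.eq_of_smul_eq_smul fun x => ?_).symm⟩
  have hrx : r • x = Φ x := by simpa using congr($(congrArg Subtype.val hr) x)
  rw [hΦx, ← hrx, mul_smul]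

lemma isBalanced_of_equiv_prod (e : M ≃ₗ[R] N × R) : IsBalanced R M := by
  refine ⟨fun r₁ r₂ h => ?_, fun ⟨Φ, hΦ⟩ => ?_⟩
  · simpa using congr((e ($(congrArg Subtype.val h) (e.symm (0, 1)))).2)
  · refine ⟨(e (Φ (e.symm (0, 1)))).2, Subtype.ext (LinearMap.ext fun x => ?_)⟩
    -- `Φ` commutes with `y ↦ (e y).2 • x`, which sends the generator `e⁻¹ (0, 1)` to `x`
    simpa using congr($(Subalgebra.mem_center_iff.mp hΦ
      ((LinearMap.snd R N R ∘ₗ e.toLinearMap).smulRight x)) (e.symm (0, 1)))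

lemma LinearMap.nonempty_equiv_ker_prod_of_surjective (f : M →ₗ[R] R)
    (hf : Function.Surjective f) : Nonempty (M ≃ₗ[R] LinearMap.ker f × R) := by
  obtain ⟨x, hx⟩ := hf 1
  exact ⟨((LinearMap.exact_subtype_ker_map f).splitSurjectiveEquiv (Submodule.injective_subtype _)
    ⟨LinearMap.toSpanSingleton R M x, by ext; simpa using hx⟩).1⟩

end Balanced

section Ext

universe w

open Limits

lemma isZero_Ext_succ_of_subsingleton_ext {R : Type*} [Ring R] {C : Type u} [Category.{v} C]
    [Abelian C] [Linear R C] [EnoughProjectives C] [HasExt.{w} C] (X Y : C) (n : ℕ)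
    (h : Subsingleton (Abelian.Ext X Y (n + 1))) :
    IsZero (((Ext R C (n + 1)).obj (Opposite.op X)).obj Y) := by
  -- both are computed on a projective resolution: a class vanishes iff its cocycle is a coboundary
  let P : ProjectiveResolution X := (HasProjectiveResolution.out (Z := X)).some
  refine IsZero.of_iso ?_ (P.isoExt (n + 1) Y)
  rw [← HomologicalComplex.exactAt_iff_isZero_homology,
    HomologicalComplex.exactAt_iff' _ n (n + 1) (n + 2) (by simp) (by simp),
    ShortComplex.moduleCat_exact_iff]
  intro φ hφ
  change P.complex.d (n + 2) (n + 1) ≫ φ = 0 at hφ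
  exact (P.extMk_eq_zero_iff φ (n + 2) rfl hφ n rfl).mp (Subsingleton.elim _ _)

end Ext

section LocalRing

open IsLocalRing

variable {R : Type u} [CommRing R] [IsLocalRing R]

lemma IsLocalRing.annihilator_residueField :
    Module.annihilator R (ResidueField R) = maximalIdeal R :=
  Ideal.annihilator_quotient

lemma IsLocalRing.subsingleton_residueField_linearMap {N : Type*} [AddCommGroup N] [Module R N]
    (h : ∀ x : N, (∀ a ∈ maximalIdeal R, a • x = 0) → x = 0) :
    Subsingleton (ResidueField R →ₗ[R] N) := by
  refine subsingleton_of_forall_eq 0 fun φ => LinearMap.ext fun v => ?_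
  have h1 : φ 1 = 0 := h _ fun a ha => by
    rw [← map_smul, Algebra.smul_def, mul_one, ResidueField.algebraMap_eq,
      (residue_eq_zero_iff a).mpr ha, map_zero]
  obtain ⟨w, rfl⟩ := residue_surjective v
  rw [← ResidueField.algebraMap_eq, Algebra.algebraMap_eq_smul_one, map_smul, h1, smul_zero,
    LinearMap.zero_apply]

lemma IsLocalRing.exists_isSMulRegular_of_forall_smul_eq_zero [IsNoetherianRing R] {N : Type*}
    [AddCommGroup N] [Module R N] [Module.Finite R N]
    (h : ∀ x : N, (∀ a ∈ maximalIdeal R, a • x = 0) → x = 0) :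
    ∃ t ∈ maximalIdeal R, IsSMulRegular N t := by
  have := subsingleton_residueField_linearMap h
  rwa [IsSMulRegular.subsingleton_linearMap_iff, annihilator_residueField] at this

lemma DepthLEOne.length_le_one [IsNoetherianRing R] (hdepth : DepthLEOne R) {rs : List R}
    (hm : ∀ r ∈ rs, r ∈ maximalIdeal R) (hreg : RingTheory.Sequence.IsRegular R rs) :
    rs.length ≤ 1 := by
  by_contra! hlen
  have hext := ModuleCat.subsingleton_ext_of_exists_isRegular (maximalIdeal R)
    (ModuleCat.of R (ResidueField R)) ?_ (ModuleCat.of R R) ?_ rs hm hreg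
  · rcases hdepth with hHom | hExt
    · obtain ⟨r, rs', rfl⟩ := List.exists_cons_of_length_pos (by omega : 0 < rs.length)
      rw [RingTheory.Sequence.isRegular_cons_iff] at hreg
      refine not_subsingleton _
        (hreg.1.linearMap_subsingleton_of_mem_annihilator (N := ResidueField R) ?_)
      rw [annihilator_residueField]
      exact hm r List.mem_cons_self
    · exact not_subsingleton _ (ModuleCat.subsingleton_of_isZero
        (isZero_Ext_succ_of_subsingleton_ext (R := R) _ _ 0 (hext 1 hlen)))
  · rw [Module.support_eq_zeroLocus, annihilator_residueField]
  · simpa [lt_top_iff_ne_top] using (maximalIdeal.isMaximal R).ne_top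

end LocalRing

open Module IsLocalRing in
theorem IsBalanced.exists_surjective_dual {R : Type u} {M : Type v} [CommRing R]
    [IsNoetherianRing R] [IsLocalRing R] (hdepth : DepthLEOne R) [AddCommGroup M] [Module R M]
    [IsReflexive R M] (hM : IsBalanced R M) : ∃ f : Dual R M, Function.Surjective f := by
  by_contra! hno
  have hmem (f : Dual R M) (x : M) : f x ∈ maximalIdeal R :=
    le_maximalIdeal (fun h => hno f (LinearMap.range_eq_top.mp h)) (LinearMap.mem_range_self f x)
  have := hM.faithfulSMul
  obtain ⟨t, htm, ht⟩ : ∃ t ∈ maximalIdeal R, IsSMulRegular R t := by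
    refine exists_isSMulRegular_of_forall_smul_eq_zero fun s hs => ?_
    refine eq_of_smul_eq_smul (α := M) fun x => ?_
    rw [zero_smul]
    refine IsReflexive.eq_zero_of_forall_dual_eq_zero R fun f => ?_
    simpa [mul_comm] using hs (f x) (hmem f x)
  obtain ⟨t', ht'm, ht'⟩ : ∃ t' ∈ maximalIdeal R, IsSMulRegular (QuotSMulTop t R) t' := by
    refine exists_isSMulRegular_of_forall_smul_eq_zero fun x hx => ?_
    obtain ⟨s, rfl⟩ := Submodule.Quotient.mk_surjective _ x
    have htM : IsSMulRegular M t :=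
      IsTorsionFree.isSMulRegular ((Commute.isRegular_iff (Commute.all t)).mpr ht)
    refine QuotSMulTop.mk_eq_zero_iff.mpr (hM.dvd_of_forall_exists_smul_eq htM
      (IsReflexive.exists_smul_eq_smul ht fun f x => ?_))
    have := hx (f x) (hmem f x)
    rw [← Submodule.Quotient.mk_smul, QuotSMulTop.mk_eq_zero_iff] at this
    simpa [mul_comm] using this
  have hm : ∀ r ∈ [t, t'], r ∈ maximalIdeal R := by
    simp only [List.mem_cons, List.not_mem_nil, or_false, forall_eq_or_imp, forall_eq]
    exact ⟨htm, ht'm⟩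
  have := hdepth.length_le_one hm <| by
    rw [isRegular_iff_isWeaklyRegular_of_subset_maximalIdeal hm]
    simp [ht, ht']
  simp at this

theorem balanced_iff_free_summand_general (R : Type u) (M : Type v) [CommRing R]
    [IsNoetherianRing R] [IsLocalRing R] (hdepth : DepthLEOne R)
    [AddCommGroup M] [Module R M] [Module.IsReflexive R M] :
    IsBalanced R M ↔
      ∃ (N : Type v) (_ : AddCommGroup N) (_ : Module R N), Nonempty (M ≃ₗ[R] N × R) := by
  refine ⟨fun hM => ?_, fun ⟨N, _, _, ⟨e⟩⟩ => isBalanced_of_equiv_prod e⟩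
  obtain ⟨f, hf⟩ := hM.exists_surjective_dual hdepth
  exact ⟨LinearMap.ker f, inferInstance, inferInstance,
    f.nonempty_equiv_ker_prod_of_surjective hf⟩

/-- Let `(R,m,k)` be a commutative Noetherian local ring of depth at most 1 and `M` a finitely
generated reflexive `R`-module.  Then `M` is balanced if and only if `M` has a nonzero free
direct summand. -/
theorem balanced_iff_free_summand (R : Type u) (M : Type v) [CommRing R]
    [IsNoetherianRing R] [IsLocalRing R] (hdepth : DepthLEOne R)
    [AddCommGroup M] [Module R M] [Module.Finite R M] [Module.IsReflexive R M] :
    IsBalanced R M ↔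
      ∃ (N : Type v) (_ : AddCommGroup N) (_ : Module R N), Nonempty (M ≃ₗ[R] N × R) :=
  balanced_iff_free_summand_general R M hdepth
end

section
/- Let R be a commutative ring and M a finitely generated R-module that is torsionless and faithful. Then there is an injective R-algebra homomorphism from the center Z(End_R(M)) of End_R(M) into End_R(τ(M)), determined by sending q ∈ Z(End_R(M)) to the endomorphism of τ(M) taking Σ_i α_i(m_i) to Σ_i α_i(q(m_i)) for α_i ∈ Hom_R(M,R) and m_i ∈ M. -/
universe u v

/-- The trace ideal of a module: the ideal generated by all images of maps `M →ₗ[R] R`. -/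
def traceIdeal (R : Type u) (M : Type v) [CommRing R] [AddCommGroup M] [Module R M] :
    Ideal R :=
  ⨆ f : M →ₗ[R] R, LinearMap.range f

theorem apply_mem_traceIdeal {R : Type u} {M : Type v} [CommRing R] [AddCommGroup M]
    [Module R M] (f : M →ₗ[R] R) (m : M) : f m ∈ traceIdeal R M :=
  Submodule.mem_iSup_of_mem f (LinearMap.mem_range_self f m)

/-!
For `q` central in `End_R(M)`, commuting `q` with the rank-one endomorphism `x ↦ β x • m` gives
`α (q m) * β x = α m * β (q x)`. So if each `s : R` is viewed as the bilinear form
`(x, β) ↦ s * β x`, precomposing with `q` sends the form of `t = Σ αᵢ mᵢ ∈ τ(M)` to the form of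
`Σ αᵢ (q mᵢ) ∈ τ(M)`. For a torsionless faithful module `s ↦ (x, β) ↦ s * β x` is injective, so
this defines `σ q t` unambiguously; all algebra-hom identities can be checked after applying this
injective map, and injectivity of `σ` follows because `τ(M)` has zero annihilator.
-/

section

variable {R : Type u} {M : Type v} [CommRing R] [AddCommGroup M] [Module R M]

variable (R M) in
noncomputable def smulEval : R →ₗ[R] M →ₗ[R] Module.Dual R (Module.Dual R M) :=
  LinearMap.toSpanSingleton R _ (Module.Dual.eval R M)

@[simp]
lemma smulEval_apply_apply_apply (s : R) (x : M) (β : Module.Dual R M) :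
    smulEval R M s x β = s * β x :=
  rfl

lemma smulEval_injective (htorsionless : Function.Injective (Module.Dual.eval R M))
    (hfaithful : Module.annihilator R M = ⊥) : Function.Injective (smulEval R M) := by
  refine (injective_iff_map_eq_zero _).mpr fun s hs => ?_
  have hs_ann : s ∈ Module.annihilator R M := Module.mem_annihilator.mpr fun x =>
    htorsionless <| LinearMap.ext fun β => by
      simpa using LinearMap.congr_fun (LinearMap.congr_fun hs x) β
  rwa [hfaithful, Ideal.mem_bot] at hs_ann

lemma eq_zero_of_forall_mem_traceIdeal_mul_eq_zero
    (htorsionless : Function.Injective (Module.Dual.eval R M))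
    (hfaithful : Module.annihilator R M = ⊥) {s : R}
    (h : ∀ t ∈ traceIdeal R M, s * t = 0) : s = 0 :=
  smulEval_injective htorsionless hfaithful <| by
    ext x β
    simpa using h _ (apply_mem_traceIdeal β x)

lemma smulEval_comp_of_mem_center {q : Module.End R M}
    (hq : q ∈ Subalgebra.center R (Module.End R M)) (α : Module.Dual R M) (m : M) :
    smulEval R M (α m) ∘ₗ q = smulEval R M (α (q m)) := by
  ext x β
  have hcomm := LinearMap.congr_fun (Subalgebra.mem_center_iff.mp hq (β.smulRight m)) x
  simp only [Module.End.mul_apply, LinearMap.smulRight_apply, map_smul] at hcomm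
  simpa [mul_comm] using congrArg α hcomm

lemma exists_mem_traceIdeal_smulEval_eq_comp {q : Module.End R M}
    (hq : q ∈ Subalgebra.center R (Module.End R M)) {t : R} (ht : t ∈ traceIdeal R M) :
    ∃ s ∈ traceIdeal R M, smulEval R M s = smulEval R M t ∘ₗ q := by
  refine Submodule.iSup_induction (fun α : Module.Dual R M => LinearMap.range α)
    (motive := fun t => ∃ s ∈ traceIdeal R M, smulEval R M s = smulEval R M t ∘ₗ q) ht ?_ ?_ ?_
  · rintro α _ ⟨m, rfl⟩
    exact ⟨α (q m), apply_mem_traceIdeal α (q m), (smulEval_comp_of_mem_center hq α m).symm⟩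
  · exact ⟨0, zero_mem _, by simp⟩
  · rintro a b ⟨s₁, hs₁, h₁⟩ ⟨s₂, hs₂, h₂⟩
    exact ⟨s₁ + s₂, add_mem hs₁ hs₂, by simp [h₁, h₂, LinearMap.add_comp]⟩

variable (htorsionless : Function.Injective (Module.Dual.eval R M))
  (hfaithful : Module.annihilator R M = ⊥)

noncomputable def traceEnd (q : Subalgebra.center R (Module.End R M)) :
    Module.End R (traceIdeal R M) :=
  let φ := smulEval R M ∘ₗ (traceIdeal R M).subtype
  (LinearEquiv.ofInjective φ ((smulEval_injective htorsionless hfaithful).comp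
    Subtype.val_injective)).symm.toLinearMap ∘ₗ
    (LinearMap.lcomp R _ (q : Module.End R M) ∘ₗ φ).codRestrict (LinearMap.range φ) fun t => by
      obtain ⟨s, hs, h⟩ := exists_mem_traceIdeal_smulEval_eq_comp q.2 t.2
      exact ⟨⟨s, hs⟩, h⟩

lemma smulEval_traceEnd_apply (q : Subalgebra.center R (Module.End R M))
    (t : traceIdeal R M) :
    smulEval R M (traceEnd htorsionless hfaithful q t) = smulEval R M t ∘ₗ q :=
  LinearEquiv.ofInjective_symm_apply (smulEval R M ∘ₗ (traceIdeal R M).subtype)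
    (h := (smulEval_injective htorsionless hfaithful).comp Subtype.val_injective) _

lemma traceEnd_apply_eq {q : Subalgebra.center R (Module.End R M)} {t : traceIdeal R M} {s : R}
    (h : smulEval R M s = smulEval R M t ∘ₗ q) : (traceEnd htorsionless hfaithful q t : R) = s :=
  smulEval_injective htorsionless hfaithful <|
    (smulEval_traceEnd_apply htorsionless hfaithful q t).trans h.symm

lemma traceEnd_eq_of_forall {q : Subalgebra.center R (Module.End R M)}
    {f : Module.End R (traceIdeal R M)}
    (h : ∀ t, smulEval R M (f t) = smulEval R M t ∘ₗ q) : traceEnd htorsionless hfaithful q = f :=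
  LinearMap.ext fun t => Subtype.ext <| traceEnd_apply_eq htorsionless hfaithful (h t)

noncomputable def centerToTraceEnd :
    Subalgebra.center R (Module.End R M) →ₐ[R] Module.End R (traceIdeal R M) where
  toFun := traceEnd htorsionless hfaithful
  map_one' := traceEnd_eq_of_forall htorsionless hfaithful fun _ => (LinearMap.comp_id _).symm
  map_mul' q₁ q₂ := traceEnd_eq_of_forall htorsionless hfaithful fun t => by
    rw [Module.End.mul_apply, smulEval_traceEnd_apply, smulEval_traceEnd_apply,
      LinearMap.comp_assoc, ← Module.End.mul_eq_comp, Subalgebra.mem_center_iff.mp q₁.2]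
    rfl
  map_zero' := traceEnd_eq_of_forall htorsionless hfaithful fun _ => by simp
  map_add' q₁ q₂ := traceEnd_eq_of_forall htorsionless hfaithful fun t => by
    simp [smulEval_traceEnd_apply, LinearMap.comp_add]
  commutes' r := traceEnd_eq_of_forall htorsionless hfaithful fun t => by
    ext x β
    simp [mul_assoc]

lemma centerToTraceEnd_injective :
    Function.Injective (centerToTraceEnd htorsionless hfaithful) := by
  intro q₁ q₂ h
  refine Subtype.ext <| LinearMap.ext fun y => htorsionless <| LinearMap.ext fun β => ?_
  show β ((q₁ : Module.End R M) y) = β ((q₂ : Module.End R M) y)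
  have hcomp (t : traceIdeal R M) :
      smulEval R M t ∘ₗ (q₁ : Module.End R M) = smulEval R M t ∘ₗ (q₂ : Module.End R M) := by
    rw [← smulEval_traceEnd_apply htorsionless hfaithful,
      ← smulEval_traceEnd_apply htorsionless hfaithful]
    exact congrArg (fun σ => smulEval R M (σ t : R)) h
  refine sub_eq_zero.mp <| eq_zero_of_forall_mem_traceIdeal_mul_eq_zero htorsionless hfaithful
    fun t ht => ?_
  have := LinearMap.congr_fun (LinearMap.congr_fun (hcomp ⟨t, ht⟩) y) β
  simp only [LinearMap.comp_apply, smulEval_apply_apply_apply] at this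
  linear_combination this

lemma centerToTraceEnd_apply_sum (q : Subalgebra.center R (Module.End R M)) {ι : Type*}
    (s : Finset ι) (α : ι → Module.Dual R M) (m : ι → M) :
    (centerToTraceEnd htorsionless hfaithful q
        ⟨∑ i ∈ s, α i (m i), sum_mem fun i _ => apply_mem_traceIdeal (α i) (m i)⟩ : R) =
      ∑ i ∈ s, α i ((q : Module.End R M) (m i)) :=
  traceEnd_apply_eq htorsionless hfaithful <| by
    simp only [map_sum, ← smulEval_comp_of_mem_center q.2]
    exact (map_sum (LinearMap.lcomp R (Module.Dual R (Module.Dual R M)) (q : Module.End R M))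
      (fun i => smulEval R M (α i (m i))) s).symm

end

theorem center_end_into_trace_end_general (R : Type u) (M : Type v) [CommRing R] [AddCommGroup M]
    [Module R M]
    (htorsionless : Function.Injective (Module.Dual.eval R M))
    (hfaithful : Module.annihilator R M = ⊥) :
    ∃ σ' : Subalgebra.center R (Module.End R M) →ₐ[R] Module.End R (traceIdeal R M),
      Function.Injective σ' ∧
      ∀ (q : Subalgebra.center R (Module.End R M)) (n : ℕ)
          (α : Fin n → (M →ₗ[R] R)) (m : Fin n → M),
        (σ' q ⟨∑ i, α i (m i),
            Submodule.sum_mem _ fun i _ => apply_mem_traceIdeal (α i) (m i)⟩ : R)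
          = ∑ i, α i ((q : Module.End R M) (m i)) :=
  ⟨centerToTraceEnd htorsionless hfaithful, centerToTraceEnd_injective htorsionless hfaithful,
    fun q _ α m => centerToTraceEnd_apply_sum htorsionless hfaithful q Finset.univ α m⟩

/-- Let `R` be a commutative ring and `M` a finitely generated, torsionless and faithful
`R`-module.  Then there is an injective `R`-algebra homomorphism from the center of
`End_R(M)` into `End_R(τ(M))`, sending `q` to the endomorphism taking `Σ αᵢ(mᵢ)` to
`Σ αᵢ(q(mᵢ))`. -/
theorem center_end_into_trace_end (R : Type u) (M : Type v) [CommRing R] [AddCommGroup M]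
    [Module R M] [Module.Finite R M]
    (htorsionless : Function.Injective (Module.Dual.eval R M))
    (hfaithful : Module.annihilator R M = ⊥) :
    ∃ σ' : Subalgebra.center R (Module.End R M) →ₐ[R] Module.End R (traceIdeal R M),
      Function.Injective σ' ∧
      ∀ (q : Subalgebra.center R (Module.End R M)) (n : ℕ)
          (α : Fin n → (M →ₗ[R] R)) (m : Fin n → M),
        (σ' q ⟨∑ i, α i (m i),
            Submodule.sum_mem _ fun i _ => apply_mem_traceIdeal (α i) (m i)⟩ : R)
          = ∑ i, α i ((q : Module.End R M) (m i)) :=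
  center_end_into_trace_end_general R M htorsionless hfaithful
end
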